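/- Let γ ∈ (0,1), let (I_t)_{t≥0} be a Markov chain on a finite state space [d], let (R_{ijt}) be an independent array of independent real-valued random variables with (R_{ijt})_t i.i.d. for each (i,j), independent of (I_t). If E[log⁺|R_{ijt}|] < ∞ for every pair (i,j) such that i is essential and p_{ij} > 0, then the infinite series ∑_{t=0}^∞ γ^t R_{I_t,I_{t+1},t} converges absolutely almost surely. -/

import Mathlib

open MeasureTheory ProbabilityTheory Filter

/-- `log⁺ x = max (log x) 0`. -/
noncomputable def posLog (x : ℝ) : ℝ := max (Real.log x) 0

/-- `(I_t)` is a homogeneous Markov chain with initial distribution `init` and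
transition matrix `P`: finite-dimensional path probabilities factorize. -/
def IsMarkovChain {Ω : Type*} [MeasureSpace Ω] {d : ℕ}
    (I : ℕ → Ω → Fin d) (init : Fin d → ENNReal) (P : Matrix (Fin d) (Fin d) ℝ) : Prop :=
  ∀ n : ℕ, ∀ path : ℕ → Fin d,
    ℙ {ω | ∀ k ≤ n, I k ω = path k}
      = init (path 0) * ∏ k ∈ Finset.range n, ENNReal.ofReal (P (path k) (path (k + 1)))

/-- `i → j`: state `j` is reachable from `i` (via the transition matrix). -/
def Reaches {d : ℕ} (P : Matrix (Fin d) (Fin d) ℝ) (i j : Fin d) : Prop :=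
  ∃ t : ℕ, 0 < (P ^ t) i j

/-- A state is essential if every state reachable from it leads back to it. -/
def Essential {d : ℕ} (P : Matrix (Fin d) (Fin d) ℝ) (i : Fin d) : Prop :=
  ∀ j, Reaches P i j → Reaches P j i

/-!
Almost surely the chain is eventually trapped among the essential states. Indeed, every state
reaches an essential one, so the block `Q` of `P` on the inessential states satisfies
`Q ^ m *ᵥ 1 ≤ C • 1` for some `m` and some `C < 1`; the probability of staying inessential up
to time `m * q` is therefore at most `d * C ^ q`, which tends to `0`. Essential states only lead
to essential states, so from some time on only pairs `(i, j)` with `i` essential and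
`p_{ij} > 0` occur. For each of these finitely many pairs, `E[log⁺ |R_{ij0}|] < ∞` and the
Borel–Cantelli lemma give `log⁺ |R_{ijt}| ≤ ε t` eventually, so the terms of the series are
eventually bounded by `(γ e^ε) ^ t`, which is summable once `γ e^ε < 1`.
-/

open Matrix

namespace Matrix

variable {n : Type*} [Fintype n]

lemma mulVec_mono {A : Matrix n n ℝ} (hA : ∀ i j, 0 ≤ A i j) {v w : n → ℝ} (hvw : v ≤ w) :
    A *ᵥ v ≤ A *ᵥ w := fun i =>
  Finset.sum_le_sum fun j _ => mul_le_mul_of_nonneg_left (hvw j) (hA i j)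

variable [DecidableEq n]

lemma pow_mulVec_one_antitone {A : Matrix n n ℝ} (hA : ∀ i j, 0 ≤ A i j) (hA1 : A *ᵥ 1 ≤ 1) :
    Antitone fun t : ℕ => (A ^ t) *ᵥ 1 := by
  refine antitone_nat_of_succ_le fun t => ?_
  rw [pow_succ, ← mulVec_mulVec]
  exact mulVec_mono (pow_apply_nonneg hA t) hA1

lemma pow_mulVec_one_le {A : Matrix n n ℝ} (hA : ∀ i j, 0 ≤ A i j) {C : ℝ} (hC : 0 ≤ C)
    (hAC : A *ᵥ 1 ≤ C • 1) (q : ℕ) : (A ^ q) *ᵥ 1 ≤ C ^ q • 1 := by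
  induction q with
  | zero => simp
  | succ q ih =>
    calc (A ^ (q + 1)) *ᵥ 1 = (A ^ q) *ᵥ (A *ᵥ 1) := by rw [pow_succ, mulVec_mulVec]
      _ ≤ (A ^ q) *ᵥ (C • 1) := mulVec_mono (pow_apply_nonneg hA q) hAC
      _ = C • (A ^ q) *ᵥ 1 := mulVec_smul _ _ _
      _ ≤ C • C ^ q • (1 : n → ℝ) := smul_le_smul_of_nonneg_left ih hC
      _ = C ^ (q + 1) • 1 := by rw [smul_smul, pow_succ']

lemma sum_path_prod_eq_dotProduct_pow_mulVec (A : Matrix n n ℝ) (g : n → ℝ) (t : ℕ) :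
    ∑ f : Fin (t + 1) → n, g (f 0) * ∏ k : Fin t, A (f k.castSucc) (f k.succ)
      = g ⬝ᵥ ((A ^ t) *ᵥ 1) := by
  induction t generalizing g with
  | zero => simp [dotProduct, ← (Equiv.funUnique (Fin 1) n).symm.sum_comp]
  | succ t ih =>
    rw [← (Fin.consEquiv fun _ => n).sum_comp, Fintype.sum_prod_type]
    simp only [Fin.consEquiv_apply, Fin.cons_zero, Fin.prod_univ_succ, Fin.castSucc_zero,
      Fin.cons_succ, ← Fin.succ_castSucc]
    have htail : ∀ x, ∑ f : Fin (t + 1) → n,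
        g x * (A x (f 0) * ∏ k : Fin t, A (f k.castSucc) (f k.succ))
          = g x * (A *ᵥ ((A ^ t) *ᵥ 1)) x := fun x => by
      rw [← Finset.mul_sum, ih]
      rfl
    simp only [htail]
    rw [pow_succ', ← mulVec_mulVec]
    rfl

lemma toBlock_pow_apply_le {A : Matrix n n ℝ} (hA : ∀ i j, 0 ≤ A i j) (p : n → Prop)
    [DecidablePred p] (t : ℕ) (i j : {i // p i}) :
    (A.toBlock p p ^ t) i j ≤ (A ^ t) i j := by
  induction t generalizing j with
  | zero => simp [one_apply, Subtype.ext_iff]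
  | succ t ih =>
    simp only [pow_succ, mul_apply, toBlock_apply]
    calc ∑ k : {i // p i}, (A.toBlock p p ^ t) i k * A k j
        ≤ ∑ k : {i // p i}, (A ^ t) i k * A k j :=
          Finset.sum_le_sum fun k _ => mul_le_mul_of_nonneg_right (ih k) (hA _ _)
      _ ≤ ∑ k, (A ^ t) i k * A k j := by
          rw [← Fintype.sum_subtype_add_sum_subtype p]
          exact le_add_of_nonneg_right
            (Finset.sum_nonneg fun k _ => mul_nonneg (pow_apply_nonneg hA t _ _) (hA _ _))

variable {P : Matrix n n ℝ}

lemma toBlock_pow_mulVec_one_apply_le (hP : P ∈ rowStochastic ℝ n) (p : n → Prop)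
    [DecidablePred p] (t : ℕ) (i : {i // p i}) :
    ((P.toBlock p p ^ t) *ᵥ 1) i ≤ 1 - ∑ j : {j // ¬ p j}, (P ^ t) i j := by
  have hPt := sum_row_of_mem_rowStochastic (pow_mem hP t) i
  rw [← Fintype.sum_subtype_add_sum_subtype p] at hPt
  calc ((P.toBlock p p ^ t) *ᵥ 1) i
      ≤ ∑ j : {j // p j}, (P ^ t) i j := by
        simpa [mulVec, dotProduct] using Finset.sum_le_sum fun j _ =>
          toBlock_pow_apply_le (fun _ _ => nonneg_of_mem_rowStochastic hP) p t i j
    _ = 1 - ∑ j : {j // ¬ p j}, (P ^ t) i j := by linarith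

lemma toBlock_mulVec_one_le (hP : P ∈ rowStochastic ℝ n) (p : n → Prop) [DecidablePred p] :
    P.toBlock p p *ᵥ 1 ≤ (1 : {i // p i} → ℝ) := fun i => by
  simpa using (toBlock_pow_mulVec_one_apply_le hP p 1 i).trans <| sub_le_self _ <|
    Finset.sum_nonneg fun j _ => by simpa using nonneg_of_mem_rowStochastic hP

end Matrix

section Reachability

variable {d : ℕ} {P : Matrix (Fin d) (Fin d) ℝ}

lemma Reaches.refl (i : Fin d) : Reaches P i i := ⟨0, by simp⟩

lemma Reaches.of_pos {i j : Fin d} (h : 0 < P i j) : Reaches P i j := ⟨1, by simpa using h⟩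

lemma Reaches.trans (hPnn : ∀ i j, 0 ≤ P i j) {i j k : Fin d} (hij : Reaches P i j)
    (hjk : Reaches P j k) : Reaches P i k := by
  obtain ⟨s, hs⟩ := hij
  obtain ⟨t, ht⟩ := hjk
  refine ⟨s + t, ?_⟩
  rw [pow_add, Matrix.mul_apply]
  exact (mul_pos hs ht).trans_le <| Finset.single_le_sum
    (fun l _ => mul_nonneg (pow_apply_nonneg hPnn s i l) (pow_apply_nonneg hPnn t l k))
    (Finset.mem_univ j)

lemma Essential.of_reaches (hPnn : ∀ i j, 0 ≤ P i j) {i j : Fin d} (hi : Essential P i)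
    (hij : Reaches P i j) : Essential P j := fun k hjk =>
  (hi k (hij.trans hPnn hjk)).trans hPnn hij

lemma exists_reaches_essential (hPnn : ∀ i j, 0 ≤ P i j) (i : Fin d) :
    ∃ e, Reaches P i e ∧ Essential P e := by
  classical
  let reach (j : Fin d) : Finset (Fin d) := {k | Reaches P j k}
  obtain ⟨e, hie, hmin⟩ := Finset.exists_min_image {j | Reaches P i j} (fun j => (reach j).card)
    ⟨i, by simp [Reaches.refl]⟩
  simp only [Finset.mem_filter, Finset.mem_univ, true_and] at hie hmin
  refine ⟨e, hie, fun k hek => ?_⟩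
  by_contra hke
  -- `reach k` would be a proper subset of `reach e`, contradicting the minimality of `e`
  have hlt : (reach k).card < (reach e).card := by
    refine Finset.card_lt_card ⟨fun l hl => ?_, fun hsub => hke ?_⟩
    · simp only [reach, Finset.mem_filter, Finset.mem_univ, true_and] at hl ⊢
      exact hek.trans hPnn hl
    · simpa [reach] using hsub (by simpa [reach] using Reaches.refl (P := P) e)
  exact (hmin k (hie.trans hPnn hek)).not_gt hlt

lemma exists_pow_toBlock_inessential_mulVec_one_le [DecidablePred (Essential P)]
    (hP : P ∈ rowStochastic ℝ (Fin d)) :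
    ∃ (m : ℕ) (C : ℝ), 0 ≤ C ∧ C < 1 ∧
      (P.toBlock (¬ Essential P ·) (¬ Essential P ·) ^ m) *ᵥ 1 ≤ C • 1 := by
  set Q := P.toBlock (¬ Essential P ·) (¬ Essential P ·)
  have hPnn : ∀ i j, 0 ≤ P i j := fun _ _ => nonneg_of_mem_rowStochastic hP
  have hdecr := pow_mulVec_one_antitone (fun _ _ => hPnn _ _)
    (toBlock_mulVec_one_le hP (¬ Essential P ·))
  have hleaks : ∀ i, ∀ᶠ t in atTop, (Q ^ t *ᵥ 1) i < 1 := by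
    intro i
    obtain ⟨e, ⟨t, hte⟩, he⟩ := exists_reaches_essential hPnn i
    refine eventually_atTop.2 ⟨t, fun s hs => (hdecr hs i).trans_lt ?_⟩
    calc (Q ^ t *ᵥ 1) i ≤ 1 - ∑ j : {j // ¬ ¬ Essential P j}, (P ^ t) i j :=
          toBlock_pow_mulVec_one_apply_le hP _ t i
      _ ≤ 1 - (P ^ t) i e := by
          refine sub_le_sub_left ?_ 1
          exact Finset.single_le_sum (f := fun j : {j // ¬ ¬ Essential P j} => (P ^ t) i j)
            (fun j _ => pow_apply_nonneg hPnn t _ _) (Finset.mem_univ ⟨e, not_not.2 he⟩)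
      _ < 1 := by linarith
  obtain ⟨m, hm⟩ := (eventually_all.2 hleaks).exists
  -- all `C` slightly below `1` bound the finitely many row sums, which are `< 1`
  obtain ⟨C, hC, hC0, hC1⟩ := ((eventually_all.2 fun i =>
    (eventually_gt_nhds (hm i)).filter_mono nhdsWithin_le_nhds).and
    (Ioo_mem_nhdsLT zero_lt_one)).exists
  exact ⟨m, C, hC0.le, hC1, fun i => by simpa using (hC i).le⟩

end Reachability

namespace IsMarkovChain

variable {Ω : Type*} [MeasureSpace Ω] {d : ℕ} {I : ℕ → Ω → Fin d} {init : Fin d → ENNReal}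
  {P : Matrix (Fin d) (Fin d) ℝ}

lemma measure_path_eq (hchain : IsMarkovChain I init P) (t : ℕ) (f : Fin (t + 1) → Fin d) :
    ℙ {ω | ∀ k : Fin (t + 1), I k ω = f k}
      = init (f 0) * ∏ k : Fin t, ENNReal.ofReal (P (f k.castSucc) (f k.succ)) := by
  have hclamp : ∀ k : Fin (t + 1), Fin.clamp k t = k := fun k =>
    Fin.ext (min_eq_left k.is_le)
  convert hchain t (fun k => f (Fin.clamp k t)) using 2
  · ext ω
    refine ⟨fun h k hk => ?_, fun h k => by simpa [hclamp] using h k k.is_le⟩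
    simpa [Fin.clamp, hk] using h ⟨k, Nat.lt_succ_iff.2 hk⟩
  · rw [← hclamp 0]
    rfl
  · rw [← Fin.prod_univ_eq_prod_range]
    refine Finset.prod_congr rfl fun k _ => ?_
    rw [← hclamp k.castSucc, ← hclamp k.succ]
    rfl

lemma ae_transition_pos (hchain : IsMarkovChain I init P) :
    ∀ᵐ ω, ∀ t, 0 < P (I t ω) (I (t + 1) ω) := by
  refine ae_all_iff.2 fun t => ae_iff.2 ?_
  refine measure_mono_null (t := ⋃ f : Fin (t + 2) → Fin d,
      {ω | ∀ k : Fin (t + 2), I k ω = f k} ∩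
        {_ω | ¬ 0 < P (f (Fin.last t).castSucc) (f (Fin.last (t + 1)))})
    (fun ω hω => Set.mem_iUnion.2 ⟨fun k => I k ω, fun k => rfl, by simpa using hω⟩)
    (measure_iUnion_null fun f => ?_)
  by_cases hf : 0 < P (f (Fin.last t).castSucc) (f (Fin.last (t + 1)))
  · simp [hf]
  refine measure_mono_null Set.inter_subset_left ?_
  rw [hchain.measure_path_eq]
  refine mul_eq_zero_of_right _ (Finset.prod_eq_zero (Finset.mem_univ (Fin.last t)) ?_)
  rw [Fin.succ_last, ENNReal.ofReal_eq_zero]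
  exact not_lt.1 hf

variable [IsProbabilityMeasure (ℙ : Measure Ω)]

lemma init_le_one (hchain : IsMarkovChain I init P) (i : Fin d) : init i ≤ 1 := by
  simpa using (hchain 0 fun _ => i).symm.trans_le prob_le_one

lemma measure_forall_le_mem_le (hchain : IsMarkovChain I init P) (hPnn : ∀ i j, 0 ≤ P i j)
    (p : Fin d → Prop) [DecidablePred p] (t : ℕ) :
    ℙ {ω | ∀ k ≤ t, p (I k ω)} ≤ ENNReal.ofReal (∑ i, ((P.toBlock p p ^ t) *ᵥ 1) i) := by
  calc ℙ {ω | ∀ k ≤ t, p (I k ω)}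
      ≤ ℙ (⋃ f : Fin (t + 1) → {i // p i}, {ω | ∀ k : Fin (t + 1), I k ω = f k}) :=
        measure_mono fun ω hω => Set.mem_iUnion.2
          ⟨fun k => ⟨I k ω, hω k (Nat.lt_succ_iff.1 k.2)⟩, fun k => rfl⟩
    _ ≤ ∑ f : Fin (t + 1) → {i // p i}, ℙ {ω | ∀ k : Fin (t + 1), I k ω = f k} :=
        measure_iUnion_fintype_le _ _
    _ ≤ ∑ f : Fin (t + 1) → {i // p i},
          ∏ k : Fin t, ENNReal.ofReal (P.toBlock p p (f k.castSucc) (f k.succ)) := by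
        gcongr with f
        rw [hchain.measure_path_eq]
        exact mul_le_of_le_one_left bot_le (hchain.init_le_one _)
    _ = ENNReal.ofReal (∑ f : Fin (t + 1) → {i // p i},
          ∏ k : Fin t, P.toBlock p p (f k.castSucc) (f k.succ)) := by
        have hnonneg : ∀ i j, 0 ≤ P.toBlock p p i j := fun i j => hPnn i j
        rw [ENNReal.ofReal_sum_of_nonneg fun f _ => Finset.prod_nonneg fun k _ => hnonneg _ _]
        simp_rw [ENNReal.ofReal_prod_of_nonneg fun k _ => hnonneg _ _]
    _ = ENNReal.ofReal (∑ i, ((P.toBlock p p ^ t) *ᵥ 1) i) := by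
        simpa [one_dotProduct] using
          congrArg ENNReal.ofReal (sum_path_prod_eq_dotProduct_pow_mulVec (P.toBlock p p) 1 t)

lemma ae_exists_essential (hchain : IsMarkovChain I init P)
    (hP : P ∈ rowStochastic ℝ (Fin d)) : ∀ᵐ ω, ∃ t, Essential P (I t ω) := by
  classical
  have hPnn : ∀ i j, 0 ≤ P i j := fun _ _ => nonneg_of_mem_rowStochastic hP
  obtain ⟨m, C, hC0, hC1, hQ⟩ := exists_pow_toBlock_inessential_mulVec_one_le hP
  set Q := P.toBlock (¬ Essential P ·) (¬ Essential P ·)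
  have hbound : ∀ q : ℕ, ℙ {ω | ¬ ∃ t, Essential P (I t ω)}
      ≤ ENNReal.ofReal (Fintype.card {i // ¬ Essential P i} * C ^ q) := fun q => calc
    ℙ {ω | ¬ ∃ t, Essential P (I t ω)} ≤ ℙ {ω | ∀ k ≤ m * q, ¬ Essential P (I k ω)} :=
        measure_mono fun ω hω k _ hk => hω ⟨k, hk⟩
    _ ≤ ENNReal.ofReal (∑ i, ((Q ^ (m * q)) *ᵥ 1) i) :=
        hchain.measure_forall_le_mem_le hPnn _ _
    _ ≤ ENNReal.ofReal (∑ _i : {i // ¬ Essential P i}, C ^ q) := by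
        refine ENNReal.ofReal_le_ofReal (Finset.sum_le_sum fun i _ => ?_)
        rw [pow_mul]
        exact (pow_mulVec_one_le (pow_apply_nonneg (fun _ _ => hPnn _ _) m)
          hC0 hQ q i).trans_eq (by simp)
    _ = ENNReal.ofReal (Fintype.card {i // ¬ Essential P i} * C ^ q) := by simp
  have hlim : Tendsto (fun q : ℕ => ENNReal.ofReal (Fintype.card {i // ¬ Essential P i} * C ^ q))
      atTop (nhds 0) := by
    simpa using ENNReal.tendsto_ofReal <| (tendsto_pow_atTop_nhds_zero_of_lt_one hC0 hC1).const_mul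
      (Fintype.card {i // ¬ Essential P i} : ℝ)
  exact ae_iff.2 (nonpos_iff_eq_zero.1 (ge_of_tendsto' hlim hbound))

lemma ae_eventually_essential (hchain : IsMarkovChain I init P)
    (hP : P ∈ rowStochastic ℝ (Fin d)) : ∀ᵐ ω, ∀ᶠ t in atTop, Essential P (I t ω) := by
  filter_upwards [hchain.ae_exists_essential hP, hchain.ae_transition_pos] with ω ⟨s, hs⟩ hpos
  refine eventually_atTop.2 ⟨s, fun t hst => ?_⟩
  induction t, hst using Nat.le_induction with
  | base => exact hs
  | succ t _ ih =>
    exact ih.of_reaches (fun _ _ => nonneg_of_mem_rowStochastic hP) (.of_pos (hpos t))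

end IsMarkovChain

lemma measurable_posLog : Measurable posLog :=
  Real.measurable_log.max measurable_const

lemma le_exp_posLog (x : ℝ) : x ≤ Real.exp (posLog x) := by
  rcases le_or_gt x 1 with hx | hx
  · exact hx.trans (Real.one_le_exp (le_max_right _ _))
  · calc x = Real.exp (Real.log x) := (Real.exp_log (by linarith)).symm
      _ ≤ Real.exp (posLog x) := Real.exp_le_exp.2 (le_max_left _ _)

lemma ae_eventually_le_mul_of_identDistrib {Ω : Type*} [MeasureSpace Ω]
    [IsProbabilityMeasure (ℙ : Measure Ω)] {Y : ℕ → Ω → ℝ}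
    (hident : ∀ t, IdentDistrib (Y t) (Y 0)) (hint : Integrable (Y 0)) (hnonneg : 0 ≤ Y 0)
    {ε : ℝ} (hε : 0 < ε) : ∀ᵐ ω, ∀ᶠ t in atTop, Y t ω ≤ ε * t := by
  have hsum : ∑' t : ℕ, ℙ {ω | Y t ω / ε ∈ Set.Ioi (t : ℝ)} ≠ ⊤ := by
    convert (tsum_prob_mem_Ioi_lt_top (hint.div_const ε)
      fun ω => div_nonneg (hnonneg ω) hε.le).ne using 3 with t
    exact ((hident t).comp (measurable_id.div_const ε)).measure_mem_eq measurableSet_Ioi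
  filter_upwards [ae_eventually_notMem hsum] with ω hω
  filter_upwards [hω] with t ht
  simpa [div_le_iff₀ hε, mul_comm] using ht

lemma exists_pos_mul_exp_lt_one {γ : ℝ} (hγ0 : 0 < γ) (hγ1 : γ < 1) :
    ∃ ε > 0, γ * Real.exp ε < 1 := by
  have hlogγ := Real.log_neg hγ0 hγ1
  refine ⟨-Real.log γ / 2, by linarith, ?_⟩
  calc γ * Real.exp (-Real.log γ / 2) = Real.exp (Real.log γ / 2) := by
        nth_rw 1 [← Real.exp_log hγ0]
        rw [← Real.exp_add]
        ring_nf
    _ < 1 := Real.exp_lt_one_iff.2 (by linarith)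

lemma summable_pow_mul_abs_of_eventually_posLog_le {γ ε : ℝ} (hγ0 : 0 < γ)
    (hc : γ * Real.exp ε < 1) {x : ℕ → ℝ} (hx : ∀ᶠ t in atTop, posLog |x t| ≤ ε * t) :
    Summable fun t => γ ^ t * |x t| := by
  refine .of_norm_bounded_eventually_nat (summable_geometric_of_lt_one (by positivity) hc) ?_
  filter_upwards [hx] with t ht
  calc ‖γ ^ t * |x t|‖ = γ ^ t * |x t| := Real.norm_of_nonneg (by positivity)
    _ ≤ γ ^ t * Real.exp (ε * t) := by
        gcongr
        exact (le_exp_posLog _).trans (Real.exp_le_exp.2 ht)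
    _ = (γ * Real.exp ε) ^ t := by rw [mul_pow, ← Real.exp_nat_mul, mul_comm ε]

theorem stmt13_general
    {Ω : Type*} [MeasureSpace Ω] [IsProbabilityMeasure (ℙ : Measure Ω)]
    {d : ℕ}
    (γ : ℝ) (hγ0 : 0 < γ) (hγ1 : γ < 1)
    (I : ℕ → Ω → Fin d)
    (init : Fin d → ENNReal) (P : Matrix (Fin d) (Fin d) ℝ)
    (hPnn : ∀ i j, 0 ≤ P i j) (hProw : ∀ i, ∑ j, P i j = 1)
    (hchain : IsMarkovChain I init P)
    (Rarr : Fin d → Fin d → ℕ → Ω → ℝ)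
    (hident : ∀ i j t, IdentDistrib (Rarr i j t) (Rarr i j 0) ℙ ℙ)
    (hlog : ∀ i j, Essential P i → 0 < P i j →
      Integrable (fun ω => posLog |Rarr i j 0 ω|) ℙ) :
    ∀ᵐ ω ∂(ℙ : Measure Ω),
      Summable (fun t => γ ^ t * |Rarr (I t ω) (I (t + 1) ω) t ω|) := by
  have hP : P ∈ rowStochastic ℝ (Fin d) := mem_rowStochastic_iff_sum.2 ⟨hPnn, hProw⟩
  obtain ⟨ε, hε, hc⟩ := exists_pos_mul_exp_lt_one hγ0 hγ1
  have hgrowth : ∀ᵐ ω, ∀ i j, Essential P i → 0 < P i j →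
      ∀ᶠ t in atTop, posLog |Rarr i j t ω| ≤ ε * t := by
    simp only [ae_all_iff, eventually_imp_distrib_left]
    exact fun i j hi hij => ae_eventually_le_mul_of_identDistrib
      (fun t => (hident i j t).comp (measurable_posLog.comp measurable_abs)) (hlog i j hi hij)
      (fun _ => le_max_right _ _) hε
  filter_upwards [hchain.ae_eventually_essential hP, hchain.ae_transition_pos, hgrowth]
    with ω hess hpos hR
  simp only [← eventually_imp_distrib_left, ← eventually_all] at hR
  refine summable_pow_mul_abs_of_eventually_posLog_le hγ0 hc ?_
  filter_upwards [hess, hR] with t hesst hRt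
  exact hRt _ _ hesst (hpos t)

theorem stmt13
    {Ω : Type*} [MeasureSpace Ω] [IsProbabilityMeasure (ℙ : Measure Ω)]
    {d : ℕ} (hd : 1 ≤ d)
    (γ : ℝ) (hγ0 : 0 < γ) (hγ1 : γ < 1)
    (I : ℕ → Ω → Fin d) (hmeasI : ∀ t, Measurable (I t))
    (init : Fin d → ENNReal) (P : Matrix (Fin d) (Fin d) ℝ)
    (hPnn : ∀ i j, 0 ≤ P i j) (hProw : ∀ i, ∑ j, P i j = 1)
    (hchain : IsMarkovChain I init P)
    (Rarr : Fin d → Fin d → ℕ → Ω → ℝ)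
    (hmeasR : ∀ i j t, Measurable (Rarr i j t))
    (hindepArr : iIndepFun
      (fun q : Fin d × Fin d × ℕ => Rarr q.1 q.2.1 q.2.2) ℙ)
    (hident : ∀ i j t, IdentDistrib (Rarr i j t) (Rarr i j 0) ℙ ℙ)
    (hindepIC : IndepFun (fun ω => fun q : Fin d × Fin d × ℕ => Rarr q.1 q.2.1 q.2.2 ω)
      (fun ω => fun t : ℕ => I t ω) ℙ)
    (hlog : ∀ i j, Essential P i → 0 < P i j →
      Integrable (fun ω => posLog |Rarr i j 0 ω|) ℙ) :
    ∀ᵐ ω ∂(ℙ : Measure Ω),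
      Summable (fun t => γ ^ t * |Rarr (I t ω) (I (t + 1) ω) t ω|) :=
  stmt13_general γ hγ0 hγ1 I init P hPnn hProw hchain Rarr hident hlog
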